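/- For every even integer k ≥ 4 and all j, m ∈ {1,…,k} with j ≠ m, there is no Hamiltonian path in the digraph S_k from the incoming vertex i_j to the outgoing vertex o_m. -/

import Mathlib

/-- A directed path in the digraph with edge relation `E` and vertex set `Vset`:
a nonempty list of distinct vertices of `Vset`, with consecutive vertices joined
by directed edges. -/
def IsPathOn {α : Type*} (E : α → α → Prop) (Vset : Finset α) (p : List α) : Prop :=
  p ≠ [] ∧ p.Nodup ∧ p.Chain' E ∧ ∀ x ∈ p, x ∈ Vset

/-- A Hamiltonian path from `u` to `v` in the digraph with edge relation `E`
and vertex set `Vset`: a list of distinct vertices containing every vertex of `Vset`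
(and no others), starting at `u`, ending at `v`, with consecutive vertices joined
by directed edges. -/
def IsHamPathOn {α : Type*} (E : α → α → Prop) (Vset : Finset α) (u v : α)
    (p : List α) : Prop :=
  p.Nodup ∧ p.Chain' E ∧ p.head? = some u ∧ p.getLast? = some v ∧ ∀ x, x ∈ p ↔ x ∈ Vset

/-- The single visit condition: there is no collection of two or more pairwise
vertex-disjoint directed paths, each starting at an incoming vertex and ending at an
outgoing vertex, whose union visits every vertex. -/
def SingleVisit {α : Type*} (E : α → α → Prop) (Vset : Finset α) {k : ℕ}
    (inc out : Fin k → α) : Prop :=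
  ¬ ∃ P : Finset (List α), 2 ≤ P.card ∧
      (∀ p ∈ P, IsPathOn E Vset p ∧ (∃ j, p.head? = some (inc j)) ∧
        (∃ m, p.getLast? = some (out m))) ∧
      (∀ p ∈ P, ∀ q ∈ P, p ≠ q → ∀ x, x ∈ p → x ∉ q) ∧
      (∀ x ∈ Vset, ∃ p ∈ P, x ∈ p)

/-- A `k`-in-out graph: a digraph (no loops, all edges within the vertex set) together
with `k` distinct incoming vertices and `k` distinct outgoing vertices (the two sets may
overlap), satisfying the paired vertices condition and the single visit condition. -/
structure IsInOutGraph {α : Type*} (E : α → α → Prop) (Vset : Finset α) {k : ℕ}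
    (inc out : Fin k → α) : Prop where
  no_loops : ∀ x, ¬ E x x
  edge_mem : ∀ x y, E x y → x ∈ Vset ∧ y ∈ Vset
  inc_mem : ∀ j, inc j ∈ Vset
  out_mem : ∀ j, out j ∈ Vset
  inc_inj : Function.Injective inc
  out_inj : Function.Injective out
  paired : ∀ j m, (∃ p, IsHamPathOn E Vset (inc j) (out m) p) ↔ j = m
  single_visit : SingleVisit E Vset inc out

/-- The directed edge set of the graph `S_k` for even `k ≥ 4`. -/
def evenEdges (k : ℕ) : Finset (ℕ × ℕ) :=
  ((Finset.Icc 1 ((k - 2) / 2)).biUnion fun i =>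
      {(4*i-2, 4*i-1), (4*i-1, 4*i-2), (4*i-1, 4*i), (4*i, 4*i-1),
        (4*i, 4*i+1), (4*i+1, 4*i)}) ∪
  ((Finset.Icc 1 ((k - 4) / 2)).biUnion fun i => {(4*i-2, 4*i+5), (4*i+1, 4*i+2)}) ∪
  ({(1, 2), (2*k-6, 2*k-1), (2*k-3, 2*k-2), (2*k-2, 1), (2*k-2, 5),
    (2*k-1, 2*k-2)} : Finset (ℕ × ℕ))

/-- The `m`-th outgoing vertex `o_m` (with `1 ≤ m ≤ k`) of `S_k` for even `k ≥ 4`: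
`o_1 = 3`, `o_{k-2} = 2k-1`, `o_{k-1} = 2k-7`, `o_k = 2k-3`, and otherwise
`o_{2j} = 4j+3` and `o_{2j+1} = 4j-3`. -/
def evenOut (k m : ℕ) : ℕ :=
  if m = 1 then 3
  else if m = k - 2 then 2*k - 1
  else if m = k - 1 then 2*k - 7
  else if m = k then 2*k - 3
  else if Even m then 2*m + 3
  else 2*m - 5

/-! Write `k = 2t + 2`. For `1 ≤ q ≤ t` the vertices `a = 4q - 2, a + 1, a + 2, a + 3` form a
block, a path whose edges go both ways; the other edges are `a → a + 7` and `a + 3 → a + 4`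
between consecutive blocks, and those through `1`, the hub `4t + 2` and the top `4t + 3`.
Incoming and outgoing vertices are odd, so the even vertex `a + 2` lies inside the path and is
traversed as `a + 1, a + 2, a + 3` or backwards. Hence the path cannot run `a → a + 1` together
with `a + 3 → a + 2`, and if it enters the block at both `a` and `a + 3` it ends at `a + 1`.
From each incoming vertex `i_j` these two facts force the successors until the end is pinned
down to `o_j`, and `o` is injective on `{1, …, k}`. -/

namespace List

variable {α : Type*} {l : List α} {u v x y z : α}

theorem pair_infix_iff_getElem? :
    [x, y] <:+: l ↔ ∃ n, l[n]? = some x ∧ l[n + 1]? = some y := by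
  rw [infix_iff_getElem?]
  constructor
  · rintro ⟨n, -, h⟩
    exact ⟨n, by simpa using h 0 (by simp), by simpa [Nat.add_comm] using h 1 (by simp)⟩
  · rintro ⟨n, hx, hy⟩
    have hlen := (getElem?_eq_some_iff.mp hy).1
    refine ⟨n, by simp only [length_cons, length_nil]; omega, fun i hi => ?_⟩
    obtain rfl | rfl : i = 0 ∨ i = 1 := by simp only [length_cons, length_nil] at hi; omega
    · simpa using hx
    · simpa [Nat.add_comm] using hy

namespace Nodup

theorem index_eq_of_getElem?_eq (hl : l.Nodup) {n m : ℕ} (hn : l[n]? = some x)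
    (hm : l[m]? = some x) : n = m :=
  (getElem?_inj (getElem?_eq_some_iff.mp hn).1 hl).mp (hn.trans hm.symm)

theorem pair_infix_left_unique (hl : l.Nodup) (hx : [x, z] <:+: l) (hy : [y, z] <:+: l) :
    x = y := by
  obtain ⟨n, hnx, hnz⟩ := pair_infix_iff_getElem?.mp hx
  obtain ⟨m, hmy, hmz⟩ := pair_infix_iff_getElem?.mp hy
  obtain rfl : n = m := by simpa using hl.index_eq_of_getElem?_eq hnz hmz
  simpa [hnx] using hmy

theorem not_pair_infix_swap (hl : l.Nodup) (hxy : [x, y] <:+: l) (hyx : [y, x] <:+: l) :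
    False := by
  obtain ⟨n, hnx, hny⟩ := pair_infix_iff_getElem?.mp hxy
  obtain ⟨m, hmy, hmx⟩ := pair_infix_iff_getElem?.mp hyx
  have := hl.index_eq_of_getElem?_eq hnx hmx
  have := hl.index_eq_of_getElem?_eq hny hmy
  omega

theorem not_pair_infix_head (hl : l.Nodup) (hu : l.head? = some u) : ¬ [x, u] <:+: l := by
  intro hxu
  obtain ⟨n, -, hnu⟩ := pair_infix_iff_getElem?.mp hxu
  rw [head?_eq_getElem?] at hu
  have := hl.index_eq_of_getElem?_eq hnu hu
  omega

theorem length_eq_three (hl : l.Nodup) (hu : l.head? = some u) (hv : l.getLast? = some v)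
    (hux : [u, x] <:+: l) (hxv : [x, v] <:+: l) : l.length = 3 := by
  obtain ⟨n, hnu, hnx⟩ := pair_infix_iff_getElem?.mp hux
  obtain ⟨m, hmx, hmv⟩ := pair_infix_iff_getElem?.mp hxv
  rw [head?_eq_getElem?] at hu
  rw [getLast?_eq_getElem?] at hv
  have := hl.index_eq_of_getElem?_eq hnu hu
  have := hl.index_eq_of_getElem?_eq hmx hnx
  have := hl.index_eq_of_getElem?_eq hmv hv
  have := (getElem?_eq_some_iff.mp hmv).1
  omega

theorem head_ne_getLast (hl : l.Nodup) (hu : l.head? = some u) (hv : l.getLast? = some v)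
    (hlen : 2 ≤ l.length) : u ≠ v := by
  rintro rfl
  rw [head?_eq_getElem?] at hu
  rw [getLast?_eq_getElem?] at hv
  have := hl.index_eq_of_getElem?_eq hu hv
  omega

end Nodup

end List

namespace IsHamPathOn

variable {α : Type*} {E : α → α → Prop} {V : Finset α} {u v x y : α} {p : List α}

theorem length_eq (hp : IsHamPathOn E V u v p) : p.length = V.card := by
  classical
  rw [← List.toFinset_card_of_nodup hp.1]
  congr 1
  ext x
  simpa using hp.2.2.2.2 x

theorem exists_succ (hp : IsHamPathOn E V u v p) (hx : x ∈ V) (hxv : x ≠ v) :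
    ∃ y, E x y ∧ [x, y] <:+: p := by
  obtain ⟨l₁, l₂, rfl⟩ := List.append_of_mem ((hp.2.2.2.2 x).2 hx)
  cases l₂ with
  | nil => exact absurd (by simpa using hp.2.2.2.1) hxv
  | cons y l₂ =>
    have hxy : [x, y] <:+: l₁ ++ x :: y :: l₂ := ⟨l₁, l₂, by simp⟩
    exact ⟨y, List.isChain_pair.mp (List.IsChain.infix hp.2.1 hxy), hxy⟩

theorem exists_pred (hp : IsHamPathOn E V u v p) (hy : y ∈ V) (hyu : y ≠ u) :
    ∃ x, E x y ∧ [x, y] <:+: p := by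
  obtain ⟨l₁, l₂, rfl⟩ := List.append_of_mem ((hp.2.2.2.2 y).2 hy)
  rcases List.eq_nil_or_concat l₁ with rfl | ⟨l₁, x, rfl⟩
  · exact absurd (by simpa using hp.2.2.1) hyu
  · have hxy : [x, y] <:+: l₁.concat x ++ y :: l₂ := ⟨l₁, l₂, by simp⟩
    exact ⟨x, List.isChain_pair.mp (List.IsChain.infix hp.2.1 hxy), hxy⟩

theorem not_infix_head (hp : IsHamPathOn E V u v p) : ¬ [x, u] <:+: p :=
  hp.1.not_pair_infix_head hp.2.2.1

theorem head_ne_last (hp : IsHamPathOn E V u v p) (hV : 2 ≤ V.card) : u ≠ v :=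
  hp.1.head_ne_getLast hp.2.2.1 hp.2.2.2.1 (hp.length_eq ▸ hV)

theorem card_eq_three (hp : IsHamPathOn E V u v p) (hux : [u, x] <:+: p) (hxv : [x, v] <:+: p) :
    V.card = 3 :=
  hp.length_eq ▸ hp.1.length_eq_three hp.2.2.1 hp.2.2.2.1 hux hxv

end IsHamPathOn

theorem mem_evenEdges {k x y : ℕ} : (x, y) ∈ evenEdges k ↔
    ((∃ i, (1 ≤ i ∧ i ≤ (k - 2) / 2) ∧
        ((x = 4*i-2 ∧ y = 4*i-1) ∨ (x = 4*i-1 ∧ y = 4*i-2) ∨ (x = 4*i-1 ∧ y = 4*i) ∨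
          (x = 4*i ∧ y = 4*i-1) ∨ (x = 4*i ∧ y = 4*i+1) ∨ (x = 4*i+1 ∧ y = 4*i))) ∨
      (∃ i, (1 ≤ i ∧ i ≤ (k - 4) / 2) ∧
        ((x = 4*i-2 ∧ y = 4*i+5) ∨ (x = 4*i+1 ∧ y = 4*i+2)))) ∨
    ((x = 1 ∧ y = 2) ∨ (x = 2*k-6 ∧ y = 2*k-1) ∨ (x = 2*k-3 ∧ y = 2*k-2) ∨
      (x = 2*k-2 ∧ y = 1) ∨ (x = 2*k-2 ∧ y = 5) ∨ (x = 2*k-1 ∧ y = 2*k-2)) := by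
  simp only [evenEdges, Finset.mem_union, Finset.mem_biUnion, Finset.mem_Icc,
    Finset.mem_insert, Finset.mem_singleton, Prod.mk.injEq]

abbrev IsSkHamPath (t s e : ℕ) (p : List ℕ) : Prop :=
  IsHamPathOn (fun x y => (x, y) ∈ evenEdges (2 * t + 2)) (Finset.Icc 1 (4 * t + 3)) s e p

namespace IsSkHamPath

variable {t s e a x : ℕ} {p : List ℕ}

theorem head_ne_end (hp : IsSkHamPath t s e p) : s ≠ e :=
  hp.head_ne_last (by rw [Nat.card_Icc]; omega)

theorem ne_end_of_head_succ_succ (hp : IsSkHamPath t s e p) (ht : 1 ≤ t) {y : ℕ}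
    (hsx : [s, x] <:+: p) (hxy : [x, y] <:+: p) : y ≠ e := by
  rintro rfl
  have := hp.card_eq_three hsx hxy
  rw [Nat.card_Icc] at this
  omega

theorem succ_one (hp : IsSkHamPath t s e p) (h : 1 ≠ e) : [1, 2] <:+: p := by
  obtain ⟨y, hE, hy⟩ := hp.exists_succ (Finset.mem_Icc.2 ⟨le_rfl, by omega⟩) h
  obtain rfl : y = 2 := by
    rcases mem_evenEdges.mp hE with (⟨i, hi, H⟩ | ⟨i, hi, H⟩) | H <;> omega
  exact hy

theorem succ_top (hp : IsSkHamPath t s e p) (h : 4 * t + 3 ≠ e) :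
    [4 * t + 3, 4 * t + 2] <:+: p := by
  obtain ⟨y, hE, hy⟩ := hp.exists_succ (Finset.mem_Icc.2 ⟨by omega, le_rfl⟩) h
  obtain rfl : y = 4 * t + 2 := by
    rcases mem_evenEdges.mp hE with (⟨i, hi, H⟩ | ⟨i, hi, H⟩) | H <;> omega
  exact hy

theorem succ_hub (hp : IsSkHamPath t s e p) (he : e % 2 = 1) :
    [4 * t + 2, 1] <:+: p ∨ [4 * t + 2, 5] <:+: p := by
  obtain ⟨y, hE, hy⟩ := hp.exists_succ (x := 4 * t + 2)
    (Finset.mem_Icc.2 ⟨by omega, by omega⟩) (by omega)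
  obtain rfl | rfl : y = 1 ∨ y = 5 := by
    rcases mem_evenEdges.mp hE with (⟨i, hi, H⟩ | ⟨i, hi, H⟩) | H <;> omega
  exacts [Or.inl hy, Or.inr hy]

theorem succ_blockA (hp : IsSkHamPath t s e p) (ha : a % 4 = 2) (hat : a < 4 * t)
    (he : e % 2 = 1) :
    [a, a + 1] <:+: p ∨ (a + 4 < 4 * t ∧ [a, a + 7] <:+: p) ∨
      (a + 2 = 4 * t ∧ [a, 4 * t + 3] <:+: p) := by
  obtain ⟨y, hE, hy⟩ := hp.exists_succ (x := a)
    (Finset.mem_Icc.2 ⟨by omega, by omega⟩) (by omega)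
  obtain rfl | ⟨h, rfl⟩ | ⟨h, rfl⟩ :
      y = a + 1 ∨ (a + 4 < 4 * t ∧ y = a + 7) ∨ (a + 2 = 4 * t ∧ y = 4 * t + 3) := by
    rcases mem_evenEdges.mp hE with (⟨i, hi, H⟩ | ⟨i, hi, H⟩) | H <;> omega
  exacts [Or.inl hy, Or.inr (Or.inl ⟨h, hy⟩), Or.inr (Or.inr ⟨h, hy⟩)]

theorem succ_blockB (hp : IsSkHamPath t s e p) (ha : a % 4 = 2) (hat : a < 4 * t)
    (hb : a + 1 ≠ e) : [a + 1, a] <:+: p ∨ [a + 1, a + 2] <:+: p := by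
  obtain ⟨y, hE, hy⟩ := hp.exists_succ (Finset.mem_Icc.2 ⟨by omega, by omega⟩) hb
  obtain rfl | rfl : y = a ∨ y = a + 2 := by
    rcases mem_evenEdges.mp hE with (⟨i, hi, H⟩ | ⟨i, hi, H⟩) | H <;> omega
  exacts [Or.inl hy, Or.inr hy]

theorem succ_blockC (hp : IsSkHamPath t s e p) (ha : a % 4 = 2) (hat : a < 4 * t)
    (he : e % 2 = 1) : [a + 2, a + 1] <:+: p ∨ [a + 2, a + 3] <:+: p := by
  obtain ⟨y, hE, hy⟩ := hp.exists_succ (x := a + 2)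
    (Finset.mem_Icc.2 ⟨by omega, by omega⟩) (by omega)
  obtain rfl | rfl : y = a + 1 ∨ y = a + 3 := by
    rcases mem_evenEdges.mp hE with (⟨i, hi, H⟩ | ⟨i, hi, H⟩) | H <;> omega
  exacts [Or.inl hy, Or.inr hy]

theorem pred_blockC (hp : IsSkHamPath t s e p) (ha : a % 4 = 2) (hat : a < 4 * t)
    (hs : s % 2 = 1) : [a + 1, a + 2] <:+: p ∨ [a + 3, a + 2] <:+: p := by
  obtain ⟨y, hE, hy⟩ := hp.exists_pred (y := a + 2)
    (Finset.mem_Icc.2 ⟨by omega, by omega⟩) (by omega)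
  obtain rfl | rfl : y = a + 1 ∨ y = a + 3 := by
    rcases mem_evenEdges.mp hE with (⟨i, hi, H⟩ | ⟨i, hi, H⟩) | H <;> omega
  exacts [Or.inl hy, Or.inr hy]

theorem succ_blockD (hp : IsSkHamPath t s e p) (ha : a % 4 = 2) (hat : a < 4 * t)
    (hd : a + 3 ≠ e) :
    [a + 3, a + 2] <:+: p ∨ (a + 4 < 4 * t ∧ [a + 3, a + 4] <:+: p) ∨
      (a + 2 = 4 * t ∧ [a + 3, 4 * t + 2] <:+: p) := by
  obtain ⟨y, hE, hy⟩ := hp.exists_succ (Finset.mem_Icc.2 ⟨by omega, by omega⟩) hd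
  obtain rfl | ⟨h, rfl⟩ | ⟨h, rfl⟩ :
      y = a + 2 ∨ (a + 4 < 4 * t ∧ y = a + 4) ∨ (a + 2 = 4 * t ∧ y = 4 * t + 2) := by
    rcases mem_evenEdges.mp hE with (⟨i, hi, H⟩ | ⟨i, hi, H⟩) | H <;> omega
  exacts [Or.inl hy, Or.inr (Or.inl ⟨h, hy⟩), Or.inr (Or.inr ⟨h, hy⟩)]

theorem blockB_eq_end_of_entered_twice (hp : IsSkHamPath t s e p) (ha : a % 4 = 2)
    (hat : a < 4 * t) (he : e % 2 = 1) {u v : ℕ} (hu : [u, a] <:+: p) (hub : u ≠ a + 1)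
    (hv : [v, a + 3] <:+: p) (hvc : v ≠ a + 2) : a + 1 = e := by
  by_contra hb
  rcases hp.succ_blockB ha hat hb with hba | hbc
  · exact hub (hp.1.pair_infix_left_unique hu hba)
  · rcases hp.succ_blockC ha hat he with hcb | hcd
    · exact hp.1.not_pair_infix_swap hbc hcb
    · exact hvc (hp.1.pair_infix_left_unique hv hcd)

theorem false_of_ab_of_dc (hp : IsSkHamPath t s e p) (ha : a % 4 = 2)
    (hat : a < 4 * t) (he : e % 2 = 1) (hab : [a, a + 1] <:+: p)
    (hdc : [a + 3, a + 2] <:+: p) : False := by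
  rcases hp.succ_blockC ha hat he with hcb | hcd
  · have := hp.1.pair_infix_left_unique hab hcb
    omega
  · exact hp.1.not_pair_infix_swap hdc hcd

theorem end_eq_of_head_one (hp : IsSkHamPath t 1 e p) (ht : 1 ≤ t) (he : e % 2 = 1) :
    e = 3 := by
  have h12 := hp.succ_one hp.head_ne_end
  rcases hp.succ_hub he with h | h
  · exact (hp.not_infix_head h).elim
  · exact (hp.blockB_eq_end_of_entered_twice (a := 2) rfl (by omega) he
      h12 (by omega) h (by omega)).symm

theorem end_eq_of_head_top (hp : IsSkHamPath t (4 * t + 3) e p) (ht : 1 ≤ t) (he : e % 2 = 1) :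
    e = 4 * t + 1 := by
  by_contra hd
  have hTh := hp.succ_top hp.head_ne_end
  obtain ⟨a, hta⟩ : ∃ a, a + 2 = 4 * t := ⟨4 * t - 2, by omega⟩
  have ha : a % 4 = 2 := by omega
  have hat : a < 4 * t := by omega
  have hab : [a, a + 1] <:+: p := by
    rcases hp.succ_blockA ha hat he with h | ⟨h, -⟩ | ⟨-, h⟩
    · exact h
    · omega
    · exact (hp.not_infix_head h).elim
  have hdc : [a + 3, a + 2] <:+: p := by
    rcases hp.succ_blockD ha hat (by omega) with h | ⟨h, -⟩ | ⟨-, h⟩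
    · exact h
    · omega
    · have := hp.1.pair_infix_left_unique h hTh
      omega
  exact hp.false_of_ab_of_dc ha hat he hab hdc

theorem runs_bcd_of_head_blockB (hp : IsSkHamPath t (a + 1) e p) (ha : a % 4 = 2)
    (hat : a < 4 * t) (he : e % 2 = 1) : [a + 1, a + 2] <:+: p ∧ [a + 2, a + 3] <:+: p := by
  have hcd : [a + 2, a + 3] <:+: p := by
    rcases hp.succ_blockC ha hat he with hcb | hcd
    · exact (hp.not_infix_head hcb).elim
    · exact hcd
  refine ⟨?_, hcd⟩
  rcases hp.pred_blockC ha hat (by omega) with hbc | hdc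
  · exact hbc
  · exact (hp.1.not_pair_infix_swap hdc hcd).elim

theorem runs_dcba_of_head_blockD (hp : IsSkHamPath t (a + 3) e p) (ha : a % 4 = 2)
    (hat : a < 4 * t) (he : e % 2 = 1) :
    [a + 3, a + 2] <:+: p ∧ [a + 2, a + 1] <:+: p ∧ [a + 1, a] <:+: p := by
  have hcb : [a + 2, a + 1] <:+: p := by
    rcases hp.succ_blockC ha hat he with hcb | hcd
    · exact hcb
    · exact (hp.not_infix_head hcd).elim
  have hdc : [a + 3, a + 2] <:+: p := by
    rcases hp.pred_blockC ha hat (by omega) with hbc | hdc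
    · exact (hp.1.not_pair_infix_swap hbc hcb).elim
    · exact hdc
  refine ⟨hdc, hcb, ?_⟩
  rcases hp.succ_blockB ha hat (hp.ne_end_of_head_succ_succ (by omega) hdc hcb) with hba | hbc
  · exact hba
  · have := hp.1.pair_infix_left_unique hbc hdc
    omega

theorem end_eq_of_head_blockB (hp : IsSkHamPath t (a + 1) e p) (ha : a % 4 = 2)
    (hat : a < 4 * t) (he : e % 2 = 1) : e = a + 5 := by
  obtain ⟨hbc, hcd⟩ := hp.runs_bcd_of_head_blockB ha hat he
  rcases hp.succ_blockD ha hat (hp.ne_end_of_head_succ_succ (by omega) hbc hcd) with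
    hdc | ⟨hnext, hda⟩ | ⟨hlast, hdh⟩
  · exact (hp.1.not_pair_infix_swap hcd hdc).elim
  · have had : [a, a + 7] <:+: p := by
      rcases hp.succ_blockA ha hat he with h | ⟨-, h⟩ | ⟨h, -⟩
      · exact (hp.not_infix_head h).elim
      · exact h
      · omega
    exact (hp.blockB_eq_end_of_entered_twice (a := a + 4) (by omega) hnext he
      hda (by omega) had (by omega)).symm
  · have haT : [a, 4 * t + 3] <:+: p := by
      rcases hp.succ_blockA ha hat he with h | ⟨h, -⟩ | ⟨-, h⟩
      · exact (hp.not_infix_head h).elim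
      · omega
      · exact h
    by_contra hT
    have := hp.1.pair_infix_left_unique hdh (hp.succ_top (by omega))
    omega

theorem end_eq_of_head_blockD (hp : IsSkHamPath t (a + 3) e p) (ha : a % 4 = 2)
    (hat : a < 4 * t) (he : e % 2 = 1) : e = a - 1 := by
  obtain ⟨-, -, hba⟩ := hp.runs_dcba_of_head_blockD ha hat he
  obtain rfl | ⟨b, rfl⟩ : a = 2 ∨ ∃ b, a = b + 4 := by
    rcases Nat.lt_or_ge a 4 with h | h
    exacts [Or.inl (by omega), Or.inr ⟨a - 4, by omega⟩]
  · by_contra h1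
    have := hp.1.pair_infix_left_unique (hp.succ_one (by omega)) hba
    omega
  · have hb : b % 4 = 2 := by omega
    have hbt : b < 4 * t := by omega
    have hab : [b, b + 1] <:+: p := by
      rcases hp.succ_blockA hb hbt he with h | ⟨-, h⟩ | ⟨h, -⟩
      · exact h
      · exact (hp.not_infix_head h).elim
      · omega
    by_contra hd
    rcases hp.succ_blockD hb hbt (by omega) with h | ⟨-, h⟩ | ⟨h, -⟩
    · exact hp.false_of_ab_of_dc hb hbt he hab h
    · have := hp.1.pair_infix_left_unique h hba
      omega
    · omega

end IsSkHamPath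

theorem evenOut_odd {k m : ℕ} (hk : 4 ≤ k) (hm1 : 1 ≤ m) (hmk : m ≤ k) :
    evenOut k m % 2 = 1 := by
  simp only [evenOut, Nat.even_iff]
  split_ifs <;> omega

theorem evenOut_injOn {k : ℕ} (hke : Even k) :
    Set.InjOn (evenOut k) (Set.Icc 1 k) := by
  rintro j ⟨hj1, hjk⟩ m ⟨hm1, hmk⟩ h
  obtain ⟨r, rfl⟩ := hke
  simp only [evenOut, Nat.even_iff] at h
  split_ifs at h <;> omega

theorem IsSkHamPath.end_eq_evenOut {t j e : ℕ} {p : List ℕ} (hp : IsSkHamPath t (2 * j - 1) e p)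
    (ht : 1 ≤ t) (he : e % 2 = 1) (hj1 : 1 ≤ j) (hjk : j ≤ 2 * t + 2) :
    e = evenOut (2 * t + 2) j := by
  -- `o_{k-2} = 2k - 1` and `o_{k-1} = 2k - 7` fit the generic formulas for even and odd `j`.
  suffices (j = 1 ∧ e = 3) ∨ (j = 2 * t + 2 ∧ e = 4 * t + 1) ∨
      (j % 2 = 0 ∧ j < 2 * t + 2 ∧ e = 2 * j + 3) ∨ (j % 2 = 1 ∧ 1 < j ∧ e = 2 * j - 5) by
    simp only [evenOut, Nat.even_iff]
    split_ifs <;> omega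
  obtain ⟨q, rfl | rfl⟩ := Nat.even_or_odd' j
  · obtain rfl | hqt : q = t + 1 ∨ q ≤ t := by omega
    · rw [show 2 * (2 * (t + 1)) - 1 = 4 * t + 3 by omega] at hp
      have := hp.end_eq_of_head_top ht he
      omega
    · rw [show 2 * (2 * q) - 1 = 4 * q - 2 + 1 by omega] at hp
      have := hp.end_eq_of_head_blockB (by omega) (by omega) he
      omega
  · obtain rfl | hq := Nat.eq_zero_or_pos q
    · have := hp.end_eq_of_head_one ht he
      omega
    · rw [show 2 * (2 * q + 1) - 1 = 4 * q - 2 + 3 by omega] at hp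
      have := hp.end_eq_of_head_blockD (by omega) (by omega) he
      omega

/-- for even `k ≥ 4` and `j ≠ m` in `{1, …, k}`, there is no Hamiltonian
path in `S_k` from the incoming vertex `i_j = 2j - 1` to the outgoing vertex `o_m`. -/
theorem evenSk_no_unpaired_hamPath (k : ℕ) (hk : 4 ≤ k) (hke : Even k)
    (j m : ℕ) (hj1 : 1 ≤ j) (hjk : j ≤ k) (hm1 : 1 ≤ m) (hmk : m ≤ k) (hjm : j ≠ m) :
    ¬ ∃ p : List ℕ, IsHamPathOn (fun x y => (x, y) ∈ evenEdges k)
        (Finset.Icc 1 (2 * k - 1)) (2 * j - 1) (evenOut k m) p := by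
  rintro ⟨p, hp⟩
  obtain ⟨t, rfl⟩ : ∃ t, k = 2 * t + 2 := by
    obtain ⟨r, hr⟩ := hke
    exact ⟨r - 1, by omega⟩
  rw [show 2 * (2 * t + 2) - 1 = 4 * t + 3 by omega] at hp
  have hend := IsSkHamPath.end_eq_evenOut hp (by omega) (evenOut_odd hk hm1 hmk) hj1 hjk
  exact hjm (evenOut_injOn hke ⟨hj1, hjk⟩ ⟨hm1, hmk⟩ hend.symm)
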